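/- Let F be a path connected topological field. Then for every compact Hausdorff space X, the Gelfand map I_F : X → Max(C(X,F)) is a homeomorphism onto its image (with the Zariski topology on Max(C(X,F))). -/

import Mathlib

/-- The Zariski topology on the maximal spectrum, induced from the prime spectrum. -/
instance (R : Type*) [CommRing R] : TopologicalSpace (MaximalSpectrum R) :=
  TopologicalSpace.induced MaximalSpectrum.toPrimeSpectrum inferInstance

/-- Evaluation at a point as a ring homomorphism on the ring of continuous functions. -/
def evalHom (X F : Type*) [TopologicalSpace X] [TopologicalSpace F] [CommRing F]
    [IsTopologicalRing F] (x : X) : C(X, F) →+* F where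
  toFun f := f x
  map_one' := rfl
  map_mul' _ _ := rfl
  map_zero' := rfl
  map_add' _ _ := rfl

/-- The Gelfand map, sending a point to the maximal ideal of functions vanishing at it. -/
def gelfandMap (X F : Type*) [TopologicalSpace X] [Field F] [TopologicalSpace F]
    [IsTopologicalRing F] : X → MaximalSpectrum C(X, F) := fun x =>
  ⟨RingHom.ker (evalHom X F x),
    RingHom.ker_isMaximal_of_surjective _ fun a => ⟨ContinuousMap.const X a, rfl⟩⟩

/-!
The cozero sets `{x | f x ≠ 0}` of `F`-valued continuous functions are exactly the preimages of
the basic open sets `D(f)` under the Gelfand map. In a completely regular space they form a basis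
of the topology: compose an Urysohn function `X → [0, 1]` with a path from `0` to `1` in `F`.
Hence the Gelfand map is inducing, and injective as soon as `X` is T₀.
-/

open Topology TopologicalSpace

section CozeroBasis

variable {X F : Type*} [TopologicalSpace X] [CompletelyRegularSpace X] [TopologicalSpace F]
  [PathConnectedSpace F]

lemma ContinuousMap.exists_apply_eq_eqOn_const {K : Set X} (hK : IsClosed K) {x : X}
    (hx : x ∉ K) (a b : F) : ∃ f : C(X, F), f x = a ∧ Set.EqOn f (fun _ ↦ b) K := by
  obtain ⟨g, hg, hgx, hgK⟩ := CompletelyRegularSpace.completely_regular x K hK hx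
  let γ : Path a b := PathConnectedSpace.somePath a b
  refine ⟨⟨γ ∘ g, γ.continuous.comp hg⟩, by simp [hgx], fun y hy ↦ ?_⟩
  simp [hgK hy]

lemma isTopologicalBasis_setOf_ne_zero [Zero F] [Nontrivial F] [T1Space F] :
    IsTopologicalBasis (Set.range fun f : C(X, F) ↦ {x | f x ≠ 0}) := by
  refine isTopologicalBasis_of_isOpen_of_nhds ?_ fun x U hxU hU ↦ ?_
  · rintro _ ⟨f, rfl⟩
    exact isOpen_compl_singleton.preimage f.continuous
  · obtain ⟨b, hb⟩ := exists_ne (0 : F)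
    obtain ⟨f, hfx, hfU⟩ :=
      ContinuousMap.exists_apply_eq_eqOn_const hU.isClosed_compl (not_not.mpr hxU) b 0
    exact ⟨_, ⟨f, rfl⟩, by simp [hfx, hb], fun y hy ↦ not_not.mp fun hyU ↦ hy (hfU hyU)⟩

end CozeroBasis

section GelfandMap

variable {X F : Type*} [TopologicalSpace X] [Field F] [TopologicalSpace F] [IsTopologicalRing F]

lemma mem_gelfandMap_asIdeal {x : X} {f : C(X, F)} :
    f ∈ (gelfandMap X F x).asIdeal ↔ f x = 0 :=
  Iff.rfl

lemma gelfandMap_preimage_basicOpen (f : C(X, F)) :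
    (MaximalSpectrum.toPrimeSpectrum ∘ gelfandMap X F) ⁻¹' PrimeSpectrum.basicOpen f =
      {x | f x ≠ 0} := by
  ext x
  exact not_congr mem_gelfandMap_asIdeal

lemma isInducing_gelfandMap [CompletelyRegularSpace X] [T1Space F] [PathConnectedSpace F] :
    IsInducing (gelfandMap X F) := by
  rw [← (IsInducing.induced MaximalSpectrum.toPrimeSpectrum).of_comp_iff]
  have hbasis := PrimeSpectrum.isTopologicalBasis_basic_opens.induced
    (MaximalSpectrum.toPrimeSpectrum ∘ gelfandMap X F)
  rw [← Set.range_comp] at hbasis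
  simp only [Function.comp_def (Set.preimage _), gelfandMap_preimage_basicOpen] at hbasis
  exact ⟨isTopologicalBasis_setOf_ne_zero.eq_generateFrom.trans
    (IsTopologicalBasis.eq_generateFrom (t := induced _ _) hbasis).symm⟩

end GelfandMap

theorem stmt_9 (F X : Type*) [Field F] [TopologicalSpace F] [IsTopologicalDivisionRing F]
    [T1Space F] [PathConnectedSpace F] [TopologicalSpace X] [CompactSpace X] [T2Space X] :
    Topology.IsEmbedding (gelfandMap X F) :=
  isInducing_gelfandMap.isEmbedding
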